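/- Let F be continuous on [a,b] and differentiable on (a,b), with least concave majorant F̂ and Z_F = {x ∈ [a,b] : F̂(x) = F(x)}. Then F̂ is differentiable on (a,b); moreover (F̂)'(x) = F'(x) for every x ∈ (a,b) ∩ Z_F, and for every connected component of [a,b] \ Z_F with closure endpoints α < β, (F̂)'(x) = (F(β)−F(α))/(β−α) for every x ∈ [α,β] ∩ (a,b). In particular F'(x) = (F̂)'(x) = (F(β)−F(α))/(β−α) whenever x = α ∈ (a,b) or x = β ∈ (a,b). -/

import Mathlib

/-!
A line through `(x, c)` lying above `F` on `[a, b]` exists as soon as `c ≥ F x` dominates every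
chord of `F` across `x`: the slopes from `(x, c)` to the graph on the right are then bounded by
those on the left, and a slope in between will do. So the majorant `L` at `x` is the supremum of
the chords across `x`. Off the contact set, compactness yields a chord attaining `L x`, and
concavity of `L` forces `L` to agree with that chord on its whole base, so `L` is affine near `x`.
At a contact point, `L` is squeezed between `F` and a supporting line, hence inherits `F'(x)`.
The set where `F < L` is open, so the endpoints `α, β` of the closure of one of its components are
contact points; between them `L` is a single chord, of slope `(F β - F α) / (β - α)`.
-/

open Set

/-- The least concave majorant of `F` on `[a, b]`. -/
noncomputable def leastConcaveMajorant (a b : ℝ) (F : ℝ → ℝ) (x : ℝ) : ℝ :=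
  sInf {y : ℝ | ∃ G : ℝ → ℝ, ConcaveOn ℝ (Set.Icc a b) G ∧
    (∀ z ∈ Set.Icc a b, F z ≤ G z) ∧ y = G x}

open Filter Topology

section Chord

variable {F : ℝ → ℝ} {u v x y z : ℝ}

noncomputable def chord (F : ℝ → ℝ) (u v x : ℝ) : ℝ := F u + slope F u v * (x - u)

@[simp] lemma chord_left : chord F u v u = F u := by simp [chord]

lemma chord_right (huv : u ≠ v) : chord F u v v = F v := by
  have : v - u ≠ 0 := sub_ne_zero.2 huv.symm
  rw [chord, slope_def_field]
  field_simp
  ring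

lemma hasDerivAt_chord : HasDerivAt (chord F u v) (slope F u v) x := by
  have := (((hasDerivAt_id x).sub_const u).const_mul (slope F u v)).const_add (F u)
  rwa [mul_one] at this

lemma slope_chord (hyz : y ≠ z) : slope (chord F u v) y z = slope F u v := by
  have : z - y ≠ 0 := sub_ne_zero.2 hyz.symm
  rw [slope_def_field (chord F u v), chord, chord]
  field_simp
  ring

lemma concaveOn_affine {S : Set ℝ} (hS : Convex ℝ S) (p s q : ℝ) :
    ConcaveOn ℝ S (fun y => p + s * (y - q)) :=
  ⟨hS, fun _ _ _ _ _ _ _ _ hts => le_of_eq <| by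
    simp only [smul_eq_mul]
    linear_combination (p - s * q) * hts⟩

lemma convexOn_affine {S : Set ℝ} (hS : Convex ℝ S) (p s q : ℝ) :
    ConvexOn ℝ S (fun y => p + s * (y - q)) :=
  ⟨hS, fun _ _ _ _ _ _ _ _ hts => le_of_eq <| by
    simp only [smul_eq_mul]
    linear_combination (s * q - p) * hts⟩

lemma chord_le_max (huv : u < v) (hx : x ∈ Icc u v) : chord F u v x ≤ max (F u) (F v) := by
  have : chord F u v x ≤ max (chord F u v u) (chord F u v v) :=
    (convexOn_affine (convex_Icc u v) (F u) (slope F u v) u).le_on_segment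
      (left_mem_Icc.2 huv.le) (right_mem_Icc.2 huv.le) (by rwa [segment_eq_Icc huv.le])
  rwa [chord_left, chord_right huv.ne] at this

lemma continuousOn_chord {S : Set ℝ} (hF : ContinuousOn F S) :
    ContinuousOn (fun p : ℝ × ℝ => chord F p.1 p.2 x)
      {p : ℝ × ℝ | p.1 ∈ S ∧ p.2 ∈ S ∧ p.1 ≠ p.2} := by
  set D := {p : ℝ × ℝ | p.1 ∈ S ∧ p.2 ∈ S ∧ p.1 ≠ p.2}
  have hF1 : ContinuousOn (fun p : ℝ × ℝ => F p.1) D :=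
    hF.comp continuousOn_fst fun _ hp => hp.1
  have hF2 : ContinuousOn (fun p : ℝ × ℝ => F p.2) D :=
    hF.comp continuousOn_snd fun _ hp => hp.2.1
  simp only [chord, slope_def_field]
  refine hF1.add (ContinuousOn.mul (ContinuousOn.div (hF2.sub hF1) ?_ ?_) ?_)
  · exact (continuous_snd.sub continuous_fst).continuousOn
  · exact fun p hp => sub_ne_zero.2 hp.2.2.symm
  · exact (continuous_const.sub continuous_fst).continuousOn

lemma ConcaveOn.eqOn_chord {L : ℝ → ℝ} (hL : ConcaveOn ℝ (Icc u v) L) (hu : F u ≤ L u)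
    (hv : F v ≤ L v) (hx : x ∈ Ioo u v) (hLx : L x ≤ chord F u v x) :
    EqOn L (chord F u v) (Icc u v) := by
  have huv : u < v := hx.1.trans hx.2
  set g := L - chord F u v
  have hg : ConcaveOn ℝ (Icc u v) g := hL.sub (convexOn_affine (convex_Icc u v) _ _ _)
  have hgu : 0 ≤ g u := by simpa [g] using hu
  have hgv : 0 ≤ g v := by simpa [g, chord_right huv.ne] using hv
  have hgx : g x ≤ 0 := by simpa [g] using hLx
  have hxI : x ∈ Icc u v := Ioo_subset_Icc_self hx
  intro y hy
  suffices g y = 0 from sub_eq_zero.1 this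
  refine le_antisymm ?_ ?_
  · rcases lt_trichotomy y x with hyx | rfl | hxy
    · refine (hg.left_le_of_le_right hy (right_mem_Icc.2 huv.le) ?_ (hgx.trans hgv)).trans hgx
      rw [openSegment_eq_Ioo (hyx.trans hx.2)]
      exact ⟨hyx, hx.2⟩
    · exact hgx
    · refine (hg.left_le_of_le_right hy (left_mem_Icc.2 huv.le) ?_ (hgx.trans hgu)).trans hgx
      rw [openSegment_symm, openSegment_eq_Ioo (hx.1.trans hxy)]
      exact ⟨hx.1, hxy⟩
  · refine (le_min hgu hgv).trans (hg.ge_on_segment (left_mem_Icc.2 huv.le)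
      (right_mem_Icc.2 huv.le) ?_)
    rwa [segment_eq_Icc huv.le]

end Chord

lemma exists_forall_le_affine_of_slope_le {S : Set ℝ} {φ : ℝ → ℝ} {x c k K : ℝ}
    (hx : φ x ≤ c)
    (hslope : ∀ u ∈ S, ∀ v ∈ S, u < x → x < v →
      (φ v - c) / (v - x) ≤ (c - φ u) / (x - u))
    (hright : ∀ v ∈ S, x < v → (φ v - c) / (v - x) ≤ K)
    (hleft : ∀ u ∈ S, u < x → k ≤ (c - φ u) / (x - u)) :
    ∃ s, ∀ y ∈ S, φ y ≤ c + s * (y - x) := by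
  set R := insert k ((fun v => (φ v - c) / (v - x)) '' {v ∈ S | x < v})
  have hR : BddAbove R := by
    refine ⟨max k K, ?_⟩
    rintro _ (rfl | ⟨v, ⟨hv, hxv⟩, rfl⟩)
    exacts [le_max_left _ _, (hright v hv hxv).trans (le_max_right _ _)]
  refine ⟨sSup R, fun y hy => ?_⟩
  rcases lt_trichotomy y x with hyx | rfl | hxy
  · have : sSup R ≤ (c - φ y) / (x - y) := by
      refine csSup_le (insert_nonempty _ _) ?_
      rintro _ (rfl | ⟨v, ⟨hv, hxv⟩, rfl⟩)
      exacts [hleft y hy hyx, hslope y hy v hv hyx hxv]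
    rw [le_div_iff₀ (sub_pos.2 hyx)] at this
    linarith
  · simpa using hx
  · have : (φ y - c) / (y - x) ≤ sSup R :=
      le_csSup hR (mem_insert_of_mem _ ⟨y, ⟨hy, hxy⟩, rfl⟩)
    rw [div_le_iff₀ (sub_pos.2 hxy)] at this
    linarith

lemma exists_le_add_mul_abs_sub {S : Set ℝ} {φ : ℝ → ℝ} {x c : ℝ}
    (hφ : ContinuousWithinAt φ S x) (hbdd : BddAbove (φ '' S)) (hx : φ x < c) :
    ∃ K, ∀ y ∈ S, φ y ≤ c + K * |y - x| := by
  obtain ⟨M, hM⟩ := hbdd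
  obtain ⟨δ, hδ, hball⟩ := Metric.mem_nhdsWithin_iff.1 (hφ.eventually_lt_const hx)
  refine ⟨max 0 ((M - c) / δ), fun y hy => ?_⟩
  by_cases hyx : |y - x| < δ
  · have : φ y < c := hball ⟨by rwa [Metric.mem_ball, Real.dist_eq], hy⟩
    nlinarith [le_max_left 0 ((M - c) / δ), abs_nonneg (y - x)]
  · have hMc : M - c ≤ max 0 ((M - c) / δ) * δ := by
      rw [← div_le_iff₀ hδ]
      exact le_max_right _ _
    have := hM (mem_image_of_mem φ hy)
    nlinarith [le_max_left 0 ((M - c) / δ)]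

lemma HasDerivAt.of_le_of_le_affine {f g : ℝ → ℝ} {x d s : ℝ} (hf : HasDerivAt f d x)
    (hfg : ∀ᶠ y in 𝓝 x, f y ≤ g y) (hgs : ∀ᶠ y in 𝓝 x, g y ≤ g x + s * (y - x))
    (hx : f x = g x) : HasDerivAt g d x := by
  have hsd : s = d := by
    have hmax : IsLocalMax (fun y => f y - s * (y - x)) x := by
      filter_upwards [hfg, hgs] with y h1 h2
      simp only [sub_self, mul_zero, sub_zero, hx]
      linarith
    have hderiv : HasDerivAt (fun y => f y - s * (y - x)) (d - s) x := by
      have := hf.sub (((hasDerivAt_id x).sub_const x).const_mul s)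
      rwa [mul_one] at this
    linarith [hmax.hasDerivAt_eq_zero hderiv]
  subst hsd
  rw [hasDerivAt_iff_isLittleO] at hf ⊢
  refine (Asymptotics.IsBigO.of_bound 1 ?_).trans_isLittleO hf
  filter_upwards [hfg, hgs] with y h1 h2
  simp only [smul_eq_mul, Real.norm_eq_abs, one_mul]
  rw [abs_le]
  constructor <;>
    nlinarith [neg_abs_le (f y - f x - (y - x) * s), abs_nonneg (f y - f x - (y - x) * s)]

lemma HasDerivAt.eq_of_eqOn_Icc {f g : ℝ → ℝ} {u v y d d' : ℝ} (hf : HasDerivAt f d y)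
    (hg : HasDerivAt g d' y) (hfg : EqOn f g (Icc u v)) (huv : u < v) (hy : y ∈ Icc u v) :
    d = d' :=
  (uniqueDiffOn_Icc huv y hy).eq_deriv _ hf.hasDerivWithinAt
    (hg.hasDerivWithinAt.congr hfg (hfg hy))

lemma IsOpen.closure_connectedComponentIn_inter_subset {α : Type*} [TopologicalSpace α]
    [LocallyConnectedSpace α] {U : Set α} (hU : IsOpen U) (t : α) :
    closure (connectedComponentIn U t) ∩ U ⊆ connectedComponentIn U t := by
  rintro y ⟨hy, hyU⟩
  obtain ⟨z, hzy, hzt⟩ := mem_closure_iff_nhds.1 hy _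
    (hU.connectedComponentIn.mem_nhds (mem_connectedComponentIn hyU))
  rw [connectedComponentIn_eq hzt, ← connectedComponentIn_eq hzy]
  exact mem_connectedComponentIn hyU

lemma IsOpen.notMem_of_closure_connectedComponentIn_eq_Icc {U : Set ℝ} (hU : IsOpen U)
    {t α β : ℝ} (hJ : closure (connectedComponentIn U t) = Icc α β) (hαβ : α ≤ β) :
    α ∉ U ∧ β ∉ U := by
  have hJ' : connectedComponentIn U t ⊆ Ioo α β := by
    rw [← interior_Icc, ← hJ]
    exact interior_maximal subset_closure hU.connectedComponentIn
  have key : ∀ γ ∈ Icc α β, γ ∈ U → γ ∈ Ioo α β := fun γ hγ hγU =>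
    hJ' (hU.closure_connectedComponentIn_inter_subset t ⟨hJ ▸ hγ, hγU⟩)
  exact ⟨fun h => (key α (left_mem_Icc.2 hαβ) h).1.false,
    fun h => (key β (right_mem_Icc.2 hαβ) h).2.false⟩

section LeastConcaveMajorant

variable {a b c x : ℝ} {F : ℝ → ℝ}

lemma leastConcaveMajorant_le {G : ℝ → ℝ} (hx : x ∈ Icc a b)
    (hG : ConcaveOn ℝ (Icc a b) G) (hFG : ∀ z ∈ Icc a b, F z ≤ G z) :
    leastConcaveMajorant a b F x ≤ G x :=
  csInf_le ⟨F x, fun _ ⟨_, _, hm, hy⟩ => hy ▸ hm x hx⟩ ⟨G, hG, hFG, rfl⟩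

lemma le_leastConcaveMajorant_of_forall (hF : ContinuousOn F (Icc a b))
    (hc : ∀ H : ℝ → ℝ, ConcaveOn ℝ (Icc a b) H → (∀ z ∈ Icc a b, F z ≤ H z) →
      c ≤ H x) :
    c ≤ leastConcaveMajorant a b F x := by
  obtain ⟨M, hM⟩ := isCompact_Icc.bddAbove_image hF
  refine le_csInf ⟨M, fun _ => M, concaveOn_const _ (convex_Icc a b),
    fun z hz => hM (mem_image_of_mem F hz), rfl⟩ ?_
  rintro _ ⟨H, hH, hFH, rfl⟩
  exact hc H hH hFH

lemma le_leastConcaveMajorant (hF : ContinuousOn F (Icc a b)) (hx : x ∈ Icc a b) :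
    F x ≤ leastConcaveMajorant a b F x :=
  le_leastConcaveMajorant_of_forall hF fun _ _ hFH => hFH x hx

lemma concaveOn_leastConcaveMajorant (hF : ContinuousOn F (Icc a b)) :
    ConcaveOn ℝ (Icc a b) (leastConcaveMajorant a b F) := by
  refine ⟨convex_Icc a b, fun y hy z hz s t hs ht hst => ?_⟩
  refine le_leastConcaveMajorant_of_forall hF fun H hH hFH => ?_
  calc s • leastConcaveMajorant a b F y + t • leastConcaveMajorant a b F z
      ≤ s • H y + t • H z := by
        gcongr
        exacts [leastConcaveMajorant_le hy hH hFH, leastConcaveMajorant_le hz hH hFH]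
    _ ≤ H (s • y + t • z) := hH.2 hy hz hs ht hst

lemma leastConcaveMajorant_le_of_chord_le (hF : ContinuousOn F (Icc a b)) (hx : x ∈ Icc a b)
    (hFx : F x ≤ c)
    (hchord : ∀ u ∈ Icc a b, ∀ v ∈ Icc a b, u < x → x < v → chord F u v x ≤ c) :
    leastConcaveMajorant a b F x ≤ c := by
  refine le_of_forall_pos_le_add fun ε hε => ?_
  obtain ⟨K, hK⟩ := exists_le_add_mul_abs_sub (hF x hx) (isCompact_Icc.bddAbove_image hF)
    (show F x < c + ε by linarith)
  have hslope : ∀ u ∈ Icc a b, ∀ v ∈ Icc a b, u < x → x < v →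
      (F v - (c + ε)) / (v - x) ≤ (c + ε - F u) / (x - u) := by
    intro u hu v hv hux hxv
    have hc := hchord u hu v hv hux hxv
    have hv' : F v = F u + slope F u v * (v - u) := (chord_right (hux.trans hxv).ne).symm
    rw [chord] at hc
    rw [div_le_div_iff₀ (sub_pos.2 hxv) (sub_pos.2 hux)]
    nlinarith [mul_le_mul_of_nonneg_left hc (sub_pos.2 (hux.trans hxv)).le]
  have hright : ∀ v ∈ Icc a b, x < v → (F v - (c + ε)) / (v - x) ≤ K := by
    intro v hv hxv
    have := hK v hv
    rw [abs_of_pos (sub_pos.2 hxv)] at this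
    rw [div_le_iff₀ (sub_pos.2 hxv)]
    linarith
  have hleft : ∀ u ∈ Icc a b, u < x → -K ≤ (c + ε - F u) / (x - u) := by
    intro u hu hux
    have := hK u hu
    rw [abs_of_neg (sub_neg.2 hux)] at this
    rw [le_div_iff₀ (sub_pos.2 hux)]
    linarith
  obtain ⟨s, hs⟩ := exists_forall_le_affine_of_slope_le (by linarith) hslope hright hleft
  simpa using leastConcaveMajorant_le hx (concaveOn_affine (convex_Icc a b) _ _ _) hs

lemma mem_Ioo_of_lt_leastConcaveMajorant (hF : ContinuousOn F (Icc a b)) (hx : x ∈ Icc a b)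
    (hlt : F x < leastConcaveMajorant a b F x) : x ∈ Ioo a b := by
  by_contra hx'
  refine (leastConcaveMajorant_le_of_chord_le hF hx le_rfl ?_).not_gt hlt
  exact fun u hu v hv hux hxv => absurd ⟨hu.1.trans_lt hux, hxv.trans_le hv.2⟩ hx'

lemma isCompact_Icc_prod_inter_preimage_max (hF : ContinuousOn F (Icc a b))
    (hx : x ∈ Icc a b) (T : ℝ) :
    IsCompact (Icc a x ×ˢ Icc x b ∩ (fun p => max (F p.1) (F p.2)) ⁻¹' Ici T) := by
  have hP : Icc a x ×ˢ Icc x b ⊆ Icc a b ×ˢ Icc a b := prod_mono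
    (Icc_subset_Icc_right hx.2) (Icc_subset_Icc_left hx.1)
  refine (isCompact_Icc.prod isCompact_Icc).of_isClosed_subset ?_ inter_subset_left
  refine ContinuousOn.preimage_isClosed_of_isClosed ?_ (isClosed_Icc.prod isClosed_Icc)
    isClosed_Ici
  exact (hF.comp continuousOn_fst fun p hp => (hP hp).1 :
    ContinuousOn (fun p : ℝ × ℝ => F p.1) _).sup
    (hF.comp continuousOn_snd fun p hp => (hP hp).2)

lemma exists_le_chord_of_lt_leastConcaveMajorant (hF : ContinuousOn F (Icc a b))
    (hx : x ∈ Icc a b) (hlt : F x < leastConcaveMajorant a b F x) :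
    ∃ u ∈ Icc a b, ∃ v ∈ Icc a b, u < x ∧ x < v ∧
      leastConcaveMajorant a b F x ≤ chord F u v x := by
  obtain ⟨T, hFT, hTL⟩ := exists_between hlt
  -- chords outside `K` have both endpoint values below `T`, hence stay below `T`
  set P := Icc a x ×ˢ Icc x b
  set K := P ∩ (fun p : ℝ × ℝ => max (F p.1) (F p.2)) ⁻¹' Ici T
  have hPI : ∀ p ∈ P, p.1 ∈ Icc a b ∧ p.2 ∈ Icc a b := fun p ⟨h1, h2⟩ =>
    ⟨⟨h1.1, h1.2.trans hx.2⟩, ⟨hx.1.trans h2.1, h2.2⟩⟩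
  have hKlt : ∀ p ∈ K, p.1 < p.2 := by
    rintro p ⟨⟨h1, h2⟩, hT⟩
    refine (h1.2.trans h2.1).lt_of_ne fun h => ?_
    have hp1 : p.1 = x := le_antisymm h1.2 (h ▸ h2.1)
    have hp2 : p.2 = x := h ▸ hp1
    simp only [mem_preimage, mem_Ici, hp1, hp2, max_self] at hT
    exact hT.not_gt hFT
  have hcont : ContinuousOn (fun p : ℝ × ℝ => chord F p.1 p.2 x) K :=
    (continuousOn_chord hF).mono fun p hp =>
      ⟨(hPI p hp.1).1, (hPI p hp.1).2, (hKlt p hp).ne⟩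
  have hbound : ∀ c, T ≤ c → (∀ p ∈ K, chord F p.1 p.2 x ≤ c) →
      leastConcaveMajorant a b F x ≤ c := by
    refine fun c hTc hKc => leastConcaveMajorant_le_of_chord_le hF hx (hFT.le.trans hTc) ?_
    intro u hu v hv hux hxv
    by_cases huv : (u, v) ∈ K
    · exact hKc _ huv
    · have : max (F u) (F v) < T := by
        by_contra h
        exact huv ⟨⟨⟨hu.1, hux.le⟩, ⟨hxv.le, hv.2⟩⟩, not_lt.1 h⟩
      exact (chord_le_max (hux.trans hxv) ⟨hux.le, hxv.le⟩).trans (this.le.trans hTc)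
  obtain ⟨p, hpK, hpmax⟩ :
      ∃ p ∈ K, IsMaxOn (fun p : ℝ × ℝ => chord F p.1 p.2 x) K p := by
    refine (isCompact_Icc_prod_inter_preimage_max hF hx T).exists_isMaxOn
      (nonempty_iff_ne_empty.2 fun hKe => ?_) hcont
    exact (hbound T le_rfl fun p hp => (hKe.subset hp).elim).not_gt hTL
  have hLp : leastConcaveMajorant a b F x ≤ chord F p.1 p.2 x := by
    have := hbound _ (le_max_right _ T) fun q hq => (hpmax hq).trans (le_max_left _ _)
    exact (le_max_iff.1 this).resolve_right hTL.not_ge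
  obtain ⟨⟨⟨hp1a, hp1x⟩, ⟨hxp2, hp2b⟩⟩, -⟩ := hpK
  have hp1 : p.1 < x := hp1x.lt_of_ne fun h => by
    rw [h, chord_left] at hLp
    exact hLp.not_gt hlt
  have hp2 : x < p.2 := hxp2.lt_of_ne fun h => by
    rw [← h, chord_right hp1.ne] at hLp
    exact hLp.not_gt hlt
  exact ⟨p.1, ⟨hp1a, hp1x.trans hx.2⟩, p.2, ⟨hx.1.trans hxp2, hp2b⟩, hp1, hp2, hLp⟩

lemma exists_eqOn_chord_of_lt_leastConcaveMajorant (hF : ContinuousOn F (Icc a b))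
    (hx : x ∈ Icc a b) (hlt : F x < leastConcaveMajorant a b F x) :
    ∃ u ∈ Icc a b, ∃ v ∈ Icc a b, u < x ∧ x < v ∧
      EqOn (leastConcaveMajorant a b F) (chord F u v) (Icc u v) := by
  obtain ⟨u, hu, v, hv, hux, hxv, hLx⟩ := exists_le_chord_of_lt_leastConcaveMajorant hF hx hlt
  refine ⟨u, hu, v, hv, hux, hxv, ConcaveOn.eqOn_chord ?_ (le_leastConcaveMajorant hF hu)
    (le_leastConcaveMajorant hF hv) ⟨hux, hxv⟩ hLx⟩
  exact (concaveOn_leastConcaveMajorant hF).subset (Icc_subset_Icc hu.1 hv.2) (convex_Icc u v)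

lemma hasDerivAt_leastConcaveMajorant_of_eq (hF : ContinuousOn F (Icc a b)) (hx : x ∈ Ioo a b)
    {d : ℝ} (hFd : HasDerivAt F d x) (heq : leastConcaveMajorant a b F x = F x) :
    HasDerivAt (leastConcaveMajorant a b F) d x := by
  have hL := concaveOn_leastConcaveMajorant hF
  have hab : a ≤ b := (hx.1.trans hx.2).le
  obtain ⟨s, hs⟩ := exists_forall_le_affine_of_slope_le le_rfl
    (fun u hu v hv hux hxv => hL.slope_anti_adjacent hu hv hux hxv)
    (fun v hv hxv => hL.slope_anti_adjacent (left_mem_Icc.2 hab) hv hx.1 hxv)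
    (fun u hu hux => hL.slope_anti_adjacent hu (right_mem_Icc.2 hab) hux hx.2)
  have hIcc : Icc a b ∈ 𝓝 x := Icc_mem_nhds hx.1 hx.2
  exact hFd.of_le_of_le_affine (eventually_of_mem hIcc fun y hy => le_leastConcaveMajorant hF hy)
    (eventually_of_mem hIcc hs) heq.symm

lemma differentiableAt_leastConcaveMajorant (hF : ContinuousOn F (Icc a b))
    (hx : x ∈ Ioo a b) (hFd : DifferentiableAt ℝ F x) :
    DifferentiableAt ℝ (leastConcaveMajorant a b F) x := by
  have hxI : x ∈ Icc a b := Ioo_subset_Icc_self hx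
  rcases (le_leastConcaveMajorant hF hxI).eq_or_lt with heq | hlt
  · exact (hasDerivAt_leastConcaveMajorant_of_eq hF hx hFd.hasDerivAt heq.symm).differentiableAt
  · obtain ⟨u, -, v, -, hux, hxv, hLc⟩ :=
      exists_eqOn_chord_of_lt_leastConcaveMajorant hF hxI hlt
    exact (hasDerivAt_chord.congr_of_eventuallyEq
      (eventually_of_mem (Icc_mem_nhds hux hxv) hLc)).differentiableAt

lemma isOpen_setOf_lt_leastConcaveMajorant (hF : ContinuousOn F (Icc a b)) :
    IsOpen {x ∈ Icc a b | F x < leastConcaveMajorant a b F x} := by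
  have hcont : ContinuousOn (fun x => leastConcaveMajorant a b F x - F x) (Ioo a b) := by
    refine ContinuousOn.sub ?_ (hF.mono Ioo_subset_Icc_self)
    simpa using (concaveOn_leastConcaveMajorant hF).continuousOn_interior
  convert hcont.isOpen_inter_preimage isOpen_Ioo (isOpen_Ioi (a := 0)) using 1
  ext x
  simp only [mem_ofPred_eq, mem_inter_iff, mem_preimage, mem_Ioi, sub_pos]
  exact ⟨fun ⟨hx, hlt⟩ => ⟨mem_Ioo_of_lt_leastConcaveMajorant hF hx hlt, hlt⟩,
    fun ⟨hx, hlt⟩ => ⟨Ioo_subset_Icc_self hx, hlt⟩⟩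

lemma hasDerivAt_leastConcaveMajorant_of_closure_component (hF : ContinuousOn F (Icc a b))
    (hFd : ∀ x ∈ Ioo a b, DifferentiableAt ℝ F x) {t α β : ℝ}
    (ht : t ∈ {x ∈ Icc a b | F x < leastConcaveMajorant a b F x})
    (hJ : closure (connectedComponentIn {x ∈ Icc a b | F x < leastConcaveMajorant a b F x} t)
      = Icc α β) (hαβ : α < β) :
    leastConcaveMajorant a b F α = F α ∧ leastConcaveMajorant a b F β = F β ∧
      ∀ y ∈ Icc α β ∩ Ioo a b,
        HasDerivAt (leastConcaveMajorant a b F) (slope F α β) y := by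
  obtain ⟨u, hu, v, hv, hut, htv, hLc⟩ :=
    exists_eqOn_chord_of_lt_leastConcaveMajorant hF ht.1 ht.2
  set L := leastConcaveMajorant a b F
  set U := {x ∈ Icc a b | F x < L x}
  set J := connectedComponentIn U t
  have huv : u < v := hut.trans htv
  have hcontact : ∀ {y}, y ∈ Icc a b → y ∉ U → L y = F y := fun hy hyU =>
    ((le_leastConcaveMajorant hF hy).eq_or_lt.resolve_right fun h => hyU ⟨hy, h⟩).symm
  have hJab : Icc α β ⊆ Icc a b :=
    hJ ▸ closure_minimal ((connectedComponentIn_subset U t).trans fun _ h => h.1) isClosed_Icc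
  obtain ⟨hαU, hβU⟩ :=
    (isOpen_setOf_lt_leastConcaveMajorant hF).notMem_of_closure_connectedComponentIn_eq_Icc
      hJ hαβ.le
  have hLα := hcontact (hJab (left_mem_Icc.2 hαβ.le)) hαU
  have hLβ := hcontact (hJab (right_mem_Icc.2 hαβ.le)) hβU
  -- `J` contains `t` but neither `u` nor `v`, where `L` touches `F`
  have hJuv : J ⊆ Ioo u v := by
    have hord : J.OrdConnected := isPreconnected_connectedComponentIn.ordConnected
    have htJ : t ∈ J := mem_connectedComponentIn ht
    have hnotJ : ∀ {w}, L w = F w → w ∉ J := fun h hwJ =>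
      (connectedComponentIn_subset U t hwJ).2.ne' h
    have huJ : u ∉ J := hnotJ (by simpa using hLc (left_mem_Icc.2 huv.le))
    have hvJ : v ∉ J := hnotJ (by simpa [chord_right huv.ne] using hLc (right_mem_Icc.2 huv.le))
    exact fun w hw => ⟨lt_of_not_ge fun h => huJ (hord.out hw htJ ⟨h, hut.le⟩),
      lt_of_not_ge fun h => hvJ (hord.out htJ hw ⟨htv.le, h⟩)⟩
  have hαβuv : Icc α β ⊆ Icc u v := hJ ▸ closure_Ioo huv.ne ▸ closure_mono hJuv
  have hslope : slope F α β = slope F u v := by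
    rw [slope_def_field, ← hLα, ← hLβ, hLc (hαβuv (left_mem_Icc.2 hαβ.le)),
      hLc (hαβuv (right_mem_Icc.2 hαβ.le)), ← slope_def_field, slope_chord hαβ.ne]
  refine ⟨hLα, hLβ, fun y ⟨hy, hyab⟩ => ?_⟩
  have hLy := (differentiableAt_leastConcaveMajorant hF hyab (hFd y hyab)).hasDerivAt
  rwa [hLy.eq_of_eqOn_Icc hasDerivAt_chord hLc huv (hαβuv hy), ← hslope] at hLy

end LeastConcaveMajorant

theorem stmt3_general (a b : ℝ) (F : ℝ → ℝ)
    (hF : ContinuousOn F (Set.Icc a b))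
    (hFdiff : ∀ x ∈ Set.Ioo a b, DifferentiableAt ℝ F x)
    (Z : Set ℝ)
    (hZ : Z = {x ∈ Set.Icc a b | leastConcaveMajorant a b F x = F x}) :
    (∀ x ∈ Set.Ioo a b, DifferentiableAt ℝ (leastConcaveMajorant a b F) x) ∧
    (∀ x ∈ Set.Ioo a b ∩ Z, deriv (leastConcaveMajorant a b F) x = deriv F x) ∧
    (∀ (J : Set ℝ) (t : ℝ), t ∈ Set.Icc a b \ Z →
      J = connectedComponentIn (Set.Icc a b \ Z) t →
      ∀ α β : ℝ, α < β → closure J = Set.Icc α β →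
        (∀ x ∈ Set.Icc α β ∩ Set.Ioo a b,
          deriv (leastConcaveMajorant a b F) x = (F β - F α) / (β - α)) ∧
        (∀ x ∈ Set.Ioo a b, (x = α ∨ x = β) →
          deriv F x = (F β - F α) / (β - α) ∧
          deriv (leastConcaveMajorant a b F) x = (F β - F α) / (β - α))) := by
  have hcontact : ∀ x ∈ Ioo a b, leastConcaveMajorant a b F x = F x →
      deriv (leastConcaveMajorant a b F) x = deriv F x := fun x hx heq =>
    (hasDerivAt_leastConcaveMajorant_of_eq hF hx (hFdiff x hx).hasDerivAt heq).deriv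
  have hU : Icc a b \ Z = {x ∈ Icc a b | F x < leastConcaveMajorant a b F x} := by
    ext x
    rw [hZ]
    exact ⟨fun ⟨hx, hxZ⟩ =>
      ⟨hx, (le_leastConcaveMajorant hF hx).lt_of_ne' fun h => hxZ ⟨hx, h⟩⟩,
      fun ⟨hx, hlt⟩ => ⟨hx, fun hxZ => hlt.ne' hxZ.2⟩⟩
  refine ⟨fun x hx => differentiableAt_leastConcaveMajorant hF hx (hFdiff x hx),
    fun x ⟨hx, hxZ⟩ => hcontact x hx (hZ ▸ hxZ).2, ?_⟩
  rintro J t ht rfl α β hαβ hJ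
  rw [hU] at ht hJ
  obtain ⟨hα, hβ, hderiv⟩ :=
    hasDerivAt_leastConcaveMajorant_of_closure_component hF hFdiff ht hJ hαβ
  have hL : ∀ x ∈ Icc α β ∩ Ioo a b,
      deriv (leastConcaveMajorant a b F) x = (F β - F α) / (β - α) := fun x hx =>
    (hderiv x hx).deriv.trans (slope_def_field F α β)
  refine ⟨hL, ?_⟩
  rintro x hx (rfl | rfl)
  · have hxL := hL x ⟨left_mem_Icc.2 hαβ.le, hx⟩
    exact ⟨(hcontact x hx hα).symm.trans hxL, hxL⟩
  · have hxL := hL x ⟨right_mem_Icc.2 hαβ.le, hx⟩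
    exact ⟨(hcontact x hx hβ).symm.trans hxL, hxL⟩

theorem stmt3 (a b : ℝ) (hab : a < b) (F : ℝ → ℝ)
    (hF : ContinuousOn F (Set.Icc a b))
    (hFdiff : ∀ x ∈ Set.Ioo a b, DifferentiableAt ℝ F x)
    (Z : Set ℝ)
    (hZ : Z = {x ∈ Set.Icc a b | leastConcaveMajorant a b F x = F x}) :
    (∀ x ∈ Set.Ioo a b, DifferentiableAt ℝ (leastConcaveMajorant a b F) x) ∧
    (∀ x ∈ Set.Ioo a b ∩ Z, deriv (leastConcaveMajorant a b F) x = deriv F x) ∧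
    (∀ (J : Set ℝ) (t : ℝ), t ∈ Set.Icc a b \ Z →
      J = connectedComponentIn (Set.Icc a b \ Z) t →
      ∀ α β : ℝ, α < β → closure J = Set.Icc α β →
        (∀ x ∈ Set.Icc α β ∩ Set.Ioo a b,
          deriv (leastConcaveMajorant a b F) x = (F β - F α) / (β - α)) ∧
        (∀ x ∈ Set.Ioo a b, (x = α ∨ x = β) →
          deriv F x = (F β - F α) / (β - α) ∧
          deriv (leastConcaveMajorant a b F) x = (F β - F α) / (β - α))) :=
  stmt3_general a b F hF hFdiff Z hZ
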